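/- For all integers n, j with 0 ≤ 2j ≤ n, the number of partitions of n whose parts of even index sum to j satisfies f(n,j) = Σ_{i=0}^{j} p(i)·p(j−i, n−2j), where p(a,b) denotes the number of partitions of a into at most b parts. -/

import Mathlib

/-- `p(n)`: the number of partitions of `n`. -/
noncomputable def partitionCount (n : ℕ) : ℕ := Fintype.card (Nat.Partition n)

/-- `p(a,b)`: the number of partitions of `a` with at most `b` parts. -/
noncomputable def partitionCountAtMostParts (a b : ℕ) : ℕ :=
  (Finset.univ.filter (fun lam : Nat.Partition a => lam.parts.card ≤ b)).card

/-- The parts of a partition, listed in weakly decreasing order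
(so that the `j`-th entry, `1`-based, is `a_j`). -/
def sortedParts {n : ℕ} (lam : Nat.Partition n) : List ℕ :=
  lam.parts.sort (· ≥ ·)

/-- The sum of the parts of even index `a_2 + a_4 + a_6 + ⋯` of a partition. -/
def evenIndexSum {n : ℕ} (lam : Nat.Partition n) : ℕ :=
  ∑ j ∈ Finset.range (sortedParts lam).length,
    if (j + 1) % 2 = 0 then (sortedParts lam).getD j 0 else 0

/-- `f(n,j)`: the number of partitions of `n` whose parts of even index sum to `j`. -/
noncomputable def f (n j : ℕ) : ℕ :=
  (Finset.univ.filter (fun lam : Nat.Partition n => evenIndexSum lam = j)).card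

/-!
Conjugation turns `a₂ + a₄ + ⋯` into `∑ ⌊p/2⌋` over the parts `p` of the conjugate partition:
both count the cells of the Young diagram lying in the rows of even (1-based) index, and a column
of length `L` contains `⌊L/2⌋` of them.

A partition of `n` with `∑ ⌊p/2⌋ = j` has exactly `n - 2j` odd parts. It is determined by the
halves `α` of its even parts, a partition of some `i ≤ j`, and the halves `β` of its odd parts
other than `1`, a partition of `j - i` into at most `n - 2j` parts; the remaining odd parts are
`1`s.
-/

open Finset

theorem card_filter_range_mod_two_eq_one (m : ℕ) : #{i ∈ range m | i % 2 = 1} = m / 2 := by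
  induction m with
  | zero => rfl
  | succ m ih =>
    rw [range_add_one, filter_insert]
    split_ifs with h
    · rw [card_insert_of_notMem (by simp), ih]; omega
    · rw [ih]; omega

namespace YoungDiagram

theorem card_filter_fst_eq_sum_rowLen (μ : YoungDiagram) (p : ℕ → Prop) [DecidablePred p] :
    #{c ∈ μ.cells | p c.1} = ∑ i ∈ range (μ.colLen 0) with p i, μ.rowLen i := by
  refine (card_eq_sum_card_fiberwise (f := Prod.fst) fun c hc => ?_).trans
    (sum_congr rfl fun i hi => ?_)
  · simp only [coe_filter, Set.mem_ofPred_eq, mem_cells] at hc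
    simp only [coe_filter, mem_range, Set.mem_ofPred_eq, ← mem_iff_lt_colLen]
    exact ⟨μ.up_left_mem le_rfl (Nat.zero_le _) hc.1, hc.2⟩
  · have hpi := (mem_filter.mp hi).2
    have : {c ∈ {c ∈ μ.cells | p c.1} | c.1 = i} = {i} ×ˢ range (μ.rowLen i) := by
      ext ⟨a, b⟩
      simp only [mem_filter, mem_cells, mem_product, mem_range, mem_singleton,
        ← mem_iff_lt_rowLen]
      aesop
    rw [this, card_product, card_singleton, one_mul, card_range]

theorem card_filter_fst_eq_sum_colLen (μ : YoungDiagram) (p : ℕ → Prop) [DecidablePred p] :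
    #{c ∈ μ.cells | p c.1} = ∑ j ∈ range (μ.rowLen 0), #{i ∈ range (μ.colLen j) | p i} := by
  refine (card_eq_sum_card_fiberwise (f := Prod.snd) fun c hc => ?_).trans
    (sum_congr rfl fun j _ => ?_)
  · simp only [coe_filter, Set.mem_ofPred_eq, mem_cells] at hc
    simp only [coe_range, Set.mem_Iio, ← mem_iff_lt_rowLen]
    exact μ.up_left_mem (Nat.zero_le _) le_rfl hc.1
  · have : {c ∈ {c ∈ μ.cells | p c.1} | c.2 = j} = {i ∈ range (μ.colLen j) | p i} ×ˢ {j} := by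
      ext ⟨a, b⟩
      simp only [mem_filter, mem_cells, mem_product, mem_range, mem_singleton,
        ← mem_iff_lt_colLen]
      aesop
    rw [this, card_product, card_singleton, mul_one]

theorem sum_rowLen_filter_eq_sum_card_filter (μ : YoungDiagram) (p : ℕ → Prop)
    [DecidablePred p] :
    ∑ i ∈ range (μ.colLen 0) with p i, μ.rowLen i =
      ∑ j ∈ range (μ.rowLen 0), #{i ∈ range (μ.colLen j) | p i} := by
  rw [← card_filter_fst_eq_sum_rowLen, card_filter_fst_eq_sum_colLen]

theorem sum_rowLens (μ : YoungDiagram) :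
    μ.rowLens.sum = ∑ i ∈ range (μ.colLen 0), μ.rowLen i :=
  rfl

theorem sum_map_rowLens_transpose (μ : YoungDiagram) (g : ℕ → ℕ) :
    (μ.transpose.rowLens.map g).sum = ∑ j ∈ range (μ.rowLen 0), g (μ.colLen j) := by
  simp only [rowLens, List.map_map, colLen_transpose, Function.comp_def, rowLen_transpose]
  rfl

theorem sum_rowLens_transpose (μ : YoungDiagram) : μ.transpose.rowLens.sum = μ.rowLens.sum := by
  simpa [sum_rowLens] using (μ.sum_rowLen_filter_eq_sum_card_filter (fun _ => True)).symm

end YoungDiagram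

namespace Nat.Partition

variable {n : ℕ}

theorem sum_sortedParts (lam : n.Partition) : (sortedParts lam).sum = n := by
  rw [← Multiset.sum_coe, sortedParts, Multiset.sort_eq, lam.parts_sum]

def toYoungDiagram (lam : n.Partition) : YoungDiagram :=
  .ofRowLens (sortedParts lam) (List.sortedGE_iff_pairwise.mpr (lam.parts.pairwise_sort _))

theorem rowLens_toYoungDiagram (lam : n.Partition) :
    lam.toYoungDiagram.rowLens = sortedParts lam :=
  YoungDiagram.rowLens_ofRowLens_eq_self fun _ hx => lam.parts_pos ((Multiset.mem_sort _).mp hx)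

def conjugate (lam : n.Partition) : n.Partition where
  parts := lam.toYoungDiagram.transpose.rowLens
  parts_pos hx := YoungDiagram.pos_of_mem_rowLens _ _ (Multiset.mem_coe.mp hx)
  parts_sum := by
    rw [Multiset.sum_coe, YoungDiagram.sum_rowLens_transpose, rowLens_toYoungDiagram,
      sum_sortedParts]

theorem parts_conjugate (lam : n.Partition) :
    lam.conjugate.parts = lam.toYoungDiagram.transpose.rowLens :=
  rfl

theorem sortedParts_conjugate (lam : n.Partition) :
    sortedParts lam.conjugate = lam.toYoungDiagram.transpose.rowLens :=
  List.Perm.eq_of_pairwise' (Multiset.pairwise_sort _ _)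
    (YoungDiagram.rowLens_sorted _).pairwise (Quotient.exact (Multiset.sort_eq _ _))

theorem toYoungDiagram_conjugate (lam : n.Partition) :
    lam.conjugate.toYoungDiagram = lam.toYoungDiagram.transpose := by
  conv_rhs =>
    rw [← YoungDiagram.ofRowLens_to_rowLens_eq_self (μ := lam.toYoungDiagram.transpose)]
  simp only [toYoungDiagram, sortedParts_conjugate]

theorem conjugate_conjugate (lam : n.Partition) : lam.conjugate.conjugate = lam := by
  ext1
  rw [parts_conjugate, toYoungDiagram_conjugate, YoungDiagram.transpose_transpose,
    rowLens_toYoungDiagram, sortedParts, Multiset.sort_eq]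

theorem evenIndexSum_eq_sum_conjugate_parts_div_two (lam : n.Partition) :
    evenIndexSum lam = (lam.conjugate.parts.map (· / 2)).sum := by
  set μ := lam.toYoungDiagram
  have hrows : sortedParts lam = μ.rowLens := (rowLens_toYoungDiagram lam).symm
  calc evenIndexSum lam = ∑ i ∈ range (μ.colLen 0) with i % 2 = 1, μ.rowLen i := by
        rw [evenIndexSum, sum_filter, hrows, YoungDiagram.length_rowLens]
        refine sum_congr rfl fun i hi => ?_
        rw [List.getD_eq_getElem _ _ (by simpa using hi), YoungDiagram.get_rowLens]
        exact if_congr (by omega) rfl rfl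
    _ = ∑ j ∈ range (μ.rowLen 0), #{i ∈ range (μ.colLen j) | i % 2 = 1} :=
        μ.sum_rowLen_filter_eq_sum_card_filter _
    _ = ∑ j ∈ range (μ.rowLen 0), μ.colLen j / 2 := by
        simp only [card_filter_range_mod_two_eq_one]
    _ = (lam.conjugate.parts.map (· / 2)).sum := by
        rw [parts_conjugate, Multiset.map_coe, Multiset.sum_coe,
          YoungDiagram.sum_map_rowLens_transpose μ (· / 2)]

end Nat.Partition

namespace Multiset

def evenHalves (s : Multiset ℕ) : Multiset ℕ := (s.filter (· % 2 = 0)).map (· / 2)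

def oddHalves (s : Multiset ℕ) : Multiset ℕ := (s.filter (· % 2 = 1)).map (· / 2)

theorem filter_even_add_filter_odd (s : Multiset ℕ) :
    s.filter (· % 2 = 0) + s.filter (· % 2 = 1) = s := by
  conv_rhs => rw [← filter_add_not (· % 2 = 0) s]
  exact congrArg _ (filter_congr fun x _ => by omega)

theorem sum_map_div_two (s : Multiset ℕ) :
    (s.map (· / 2)).sum = (evenHalves s).sum + (oddHalves s).sum := by
  conv_lhs => rw [← filter_even_add_filter_odd s]
  rw [map_add, sum_add, evenHalves, oddHalves]

theorem map_evenHalves_add_map_oddHalves (s : Multiset ℕ) :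
    (evenHalves s).map (2 * ·) + (oddHalves s).map (2 * · + 1) = s := by
  conv_rhs => rw [← filter_even_add_filter_odd s]
  simp only [evenHalves, oddHalves, map_map, Function.comp_def]
  congr 1 <;> refine (map_congr rfl fun x hx => ?_).trans (map_id' _) <;>
    have := of_mem_filter hx <;> omega

theorem sum_eq_two_mul_sum_halves (s : Multiset ℕ) :
    s.sum = 2 * (evenHalves s).sum + 2 * (oddHalves s).sum + card (oddHalves s) := by
  conv_lhs => rw [← map_evenHalves_add_map_oddHalves s]
  rw [sum_add, sum_map_mul_left, map_id', sum_map_add, sum_map_mul_left, map_id', map_const',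
    sum_replicate, smul_eq_mul, mul_one, add_assoc]

theorem evenHalves_map_add_map (A B : Multiset ℕ) :
    evenHalves (A.map (2 * ·) + B.map (2 * · + 1)) = A := by
  simp [evenHalves, filter_add, filter_map, map_map]

theorem oddHalves_map_add_map (A B : Multiset ℕ) :
    oddHalves (A.map (2 * ·) + B.map (2 * · + 1)) = B := by
  simp only [oddHalves, filter_add, filter_map, map_add, map_map, Function.comp_def]
  simp [Nat.mul_add_div]

theorem pos_of_mem_evenHalves {s : Multiset ℕ} (hs : ∀ p ∈ s, 0 < p) {x : ℕ}
    (hx : x ∈ evenHalves s) : 0 < x := by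
  obtain ⟨p, hp, rfl⟩ := mem_map.mp hx
  have := hs p (mem_of_mem_filter hp)
  have := of_mem_filter hp
  omega

theorem filter_ne_zero_add_replicate {B : Multiset ℕ} {m : ℕ} (h : card B = m) :
    B.filter (· ≠ 0) + replicate (m - card (B.filter (· ≠ 0))) 0 = B := by
  have hsplit := filter_add_not (· ≠ 0) B
  have hzero : B.filter (fun x => ¬x ≠ 0) = replicate (card (B.filter fun x => ¬x ≠ 0)) 0 :=
    eq_replicate_card.mpr fun b hb => by simpa using of_mem_filter hb
  have hcard : m - card (B.filter (· ≠ 0)) = card (B.filter fun x => ¬x ≠ 0) := by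
    rw [← h, ← congrArg card hsplit, card_add]
    omega
  rw [hcard, ← hzero, hsplit]

end Multiset

namespace Nat.Partition

def ofHalves {i k m n : ℕ} (hn : 2 * i + 2 * k + m = n) (α : i.Partition) (β : k.Partition)
    (hβ : β.parts.card ≤ m) : n.Partition where
  parts := α.parts.map (2 * ·) + (β.parts + .replicate (m - β.parts.card) 0).map (2 * · + 1)
  parts_pos hx := by
    rcases Multiset.mem_add.mp hx with hx | hx <;> obtain ⟨a, ha, rfl⟩ := Multiset.mem_map.mp hx
    · exact Nat.mul_pos two_pos (α.parts_pos ha)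
    · exact Nat.succ_pos _
  parts_sum := by
    rw [Multiset.sum_eq_two_mul_sum_halves, Multiset.evenHalves_map_add_map,
      Multiset.oddHalves_map_add_map, Multiset.sum_add, Multiset.sum_replicate, Multiset.card_add,
      Multiset.card_replicate, α.parts_sum, β.parts_sum, smul_zero, add_zero]
    omega

theorem card_oddHalves_parts {i k m n : ℕ} (hn : 2 * i + 2 * k + m = n) {π : n.Partition}
    (he : π.parts.evenHalves.sum = i) (ho : π.parts.oddHalves.sum = k) :
    π.parts.oddHalves.card = m := by
  have := π.parts_sum
  rw [Multiset.sum_eq_two_mul_sum_halves, he, ho] at this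
  omega

theorem card_filter_evenHalves_oddHalves {i k m n : ℕ} (hn : 2 * i + 2 * k + m = n) :
    #{π : n.Partition | π.parts.evenHalves.sum = i ∧ π.parts.oddHalves.sum = k} =
      Fintype.card i.Partition * #{β : k.Partition | β.parts.card ≤ m} := by
  rw [← Finset.card_univ, ← Finset.card_product]
  refine card_bij'
    (fun π hπ => (⟨π.parts.evenHalves, Multiset.pos_of_mem_evenHalves fun _ => π.parts_pos,
      (mem_filter.mp hπ).2.1⟩, ofSums k π.parts.oddHalves (mem_filter.mp hπ).2.2))
    (fun x hx => ofHalves hn x.1 x.2 (mem_filter.mp (mem_product.mp hx).2).2) ?_ ?_ ?_ ?_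
  · intro π hπ
    obtain ⟨he, ho⟩ := (mem_filter.mp hπ).2
    refine mem_product.mpr ⟨mem_univ _, mem_filter.mpr ⟨mem_univ _, ?_⟩⟩
    exact (Multiset.card_le_card (Multiset.filter_le _ _)).trans
      (card_oddHalves_parts hn he ho).le
  · intro x _
    refine mem_filter.mpr ⟨mem_univ _, ?_⟩
    simp only [ofHalves, Multiset.evenHalves_map_add_map, Multiset.oddHalves_map_add_map,
      Multiset.sum_add, Multiset.sum_replicate, x.1.parts_sum, x.2.parts_sum, smul_zero, add_zero,
      and_self]
  · intro π hπ
    obtain ⟨he, ho⟩ := (mem_filter.mp hπ).2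
    ext1
    simp only [ofHalves, ofSums_parts]
    rw [Multiset.filter_ne_zero_add_replicate (card_oddHalves_parts hn he ho),
      Multiset.map_evenHalves_add_map_oddHalves]
  · intro x _
    refine Prod.ext (Partition.ext (Multiset.evenHalves_map_add_map _ _)) (Partition.ext ?_)
    simp only [ofHalves, ofSums_parts, Multiset.oddHalves_map_add_map, Multiset.filter_add]
    rw [Multiset.filter_eq_self.mpr fun _ h => (x.2.parts_pos h).ne',
      Multiset.filter_eq_nil.mpr fun _ h => by simp [Multiset.eq_of_mem_replicate h], add_zero]

end Nat.Partition

theorem f_eq_card_filter_sum_map_div_two (n j : ℕ) :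
    f n j = #{π : n.Partition | (π.parts.map (· / 2)).sum = j} := by
  refine card_nbij' Nat.Partition.conjugate Nat.Partition.conjugate ?_ ?_
    (fun lam _ => lam.conjugate_conjugate) (fun π _ => π.conjugate_conjugate)
  · intro lam hlam
    simpa [← Nat.Partition.evenIndexSum_eq_sum_conjugate_parts_div_two] using hlam
  · intro π hπ
    simpa [Nat.Partition.evenIndexSum_eq_sum_conjugate_parts_div_two,
      Nat.Partition.conjugate_conjugate] using hπ

theorem card_filter_sum_map_div_two {n j : ℕ} (hj : 2 * j ≤ n) :
    #{π : n.Partition | (π.parts.map (· / 2)).sum = j} = ∑ i ∈ range (j + 1),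
      partitionCount i * partitionCountAtMostParts (j - i) (n - 2 * j) := by
  rw [card_eq_sum_card_fiberwise (f := fun π : n.Partition => π.parts.evenHalves.sum)
    (t := range (j + 1)) fun π hπ => ?_]
  · refine sum_congr rfl fun i hi => ?_
    have hij : i ≤ j := Nat.lt_succ_iff.mp (mem_range.mp hi)
    rw [filter_filter, partitionCount, partitionCountAtMostParts,
      ← Nat.Partition.card_filter_evenHalves_oddHalves (k := j - i) (m := n - 2 * j) (n := n)
        (by omega)]
    congr 1
    refine filter_congr fun π _ => ?_
    rw [Multiset.sum_map_div_two]
    omega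
  · have := (mem_filter.mp hπ).2
    rw [Multiset.sum_map_div_two] at this
    simp only [coe_range, Set.mem_Iio]
    omega

theorem stmt_2 (n j : ℕ) (hj : 2 * j ≤ n) :
    f n j = ∑ i ∈ Finset.range (j + 1),
      partitionCount i * partitionCountAtMostParts (j - i) (n - 2 * j) := by
  rw [f_eq_card_filter_sum_map_div_two, card_filter_sum_map_div_two hj]
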